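/- arXiv:1805.00748 — 2 statements merged into one kernel-verified Lean document; each statement's English description precedes it below -/
import Mathlib

section
/- For every LTL formula φ in negation normal form: if φ has at most n proper subformulas, then Reach(φ) has at most 2^(2^n) elements. -/
/-- LTL formulas in negation normal form over atomic propositions `Ap`. -/
inductive LTL (Ap : Type) : Type
  | tt : LTL Ap
  | ff : LTL Ap
  | atom (a : Ap) : LTL Ap
  | natom (a : Ap) : LTL Ap
  | conj (φ ψ : LTL Ap) : LTL Ap
  | disj (φ ψ : LTL Ap) : LTL Ap
  | next (φ : LTL Ap) : LTL Ap
  | fut (φ : LTL Ap) : LTL Ap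
  | glob (φ : LTL Ap) : LTL Ap
  | untl (φ ψ : LTL Ap) : LTL Ap
  | wUntl (φ ψ : LTL Ap) : LTL Ap
  | strongRel (φ ψ : LTL Ap) : LTL Ap
  | rel (φ ψ : LTL Ap) : LTL Ap

variable {Ap : Type} [DecidableEq Ap]

/-- The suffix `w_i` of an infinite word. -/
def suffix (w : ℕ → Finset Ap) (i : ℕ) : ℕ → Finset Ap := fun k => w (i + k)

/-- Standard LTL satisfaction over infinite words over `2^Ap`. -/
def Sat : (ℕ → Finset Ap) → LTL Ap → Prop
  | _, .tt => True
  | _, .ff => False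
  | w, .atom a => a ∈ w 0
  | w, .natom a => a ∉ w 0
  | w, .conj φ ψ => Sat w φ ∧ Sat w ψ
  | w, .disj φ ψ => Sat w φ ∨ Sat w ψ
  | w, .next φ => Sat (suffix w 1) φ
  | w, .fut φ => ∃ k, Sat (suffix w k) φ
  | w, .glob φ => ∀ k, Sat (suffix w k) φ
  | w, .untl φ ψ => ∃ k, Sat (suffix w k) ψ ∧ ∀ j < k, Sat (suffix w j) φ
  | w, .wUntl φ ψ =>
      (∀ k, Sat (suffix w k) φ) ∨ (∃ k, Sat (suffix w k) ψ ∧ ∀ j < k, Sat (suffix w j) φ)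
  | w, .strongRel φ ψ => ∃ k, Sat (suffix w k) φ ∧ ∀ j ≤ k, Sat (suffix w j) ψ
  | w, .rel φ ψ =>
      (∀ k, Sat (suffix w k) ψ) ∨ (∃ k, Sat (suffix w k) φ ∧ ∀ j ≤ k, Sat (suffix w j) ψ)

/-- The "after" function on a single letter `ν ∈ 2^Ap`. -/
def afLetter : LTL Ap → Finset Ap → LTL Ap
  | .tt, _ => .tt
  | .ff, _ => .ff
  | .atom a, ν => if a ∈ ν then .tt else .ff
  | .natom a, ν => if a ∈ ν then .ff else .tt
  | .conj φ ψ, ν => .conj (afLetter φ ν) (afLetter ψ ν)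
  | .disj φ ψ, ν => .disj (afLetter φ ν) (afLetter ψ ν)
  | .next φ, _ => φ
  | .fut φ, ν => .disj (afLetter φ ν) (.fut φ)
  | .glob φ, ν => .conj (afLetter φ ν) (.glob φ)
  | .untl φ ψ, ν => .disj (afLetter ψ ν) (.conj (afLetter φ ν) (.untl φ ψ))
  | .wUntl φ ψ, ν => .disj (afLetter ψ ν) (.conj (afLetter φ ν) (.wUntl φ ψ))
  | .strongRel φ ψ, ν => .conj (afLetter ψ ν) (.disj (afLetter φ ν) (.strongRel φ ψ))
  | .rel φ ψ, ν => .conj (afLetter ψ ν) (.disj (afLetter φ ν) (.rel φ ψ))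

/-- The "after" function extended to finite words. -/
def af : LTL Ap → List (Finset Ap) → LTL Ap
  | φ, [] => φ
  | φ, ν :: u => af (afLetter φ ν) u

/-- The finite prefix `w_{0i} = w[0]⋯w[i-1]` of an infinite word. -/
def prefixWord (w : ℕ → Finset Ap) (i : ℕ) : List (Finset Ap) :=
  (List.range i).map w

/-- The finite infix `w_{ij} = w[i]⋯w[j-1]` of an infinite word. -/
def infixWord (w : ℕ → Finset Ap) (i j : ℕ) : List (Finset Ap) :=
  (List.range (j - i)).map (fun k => w (i + k))

/-- Evaluation of a formula as a propositional formula, where every maximal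
proper subformula (root not `∧`/`∨`) is treated as a propositional variable
whose truth value is given by the assignment `v`. -/
def propEval (v : LTL Ap → Prop) : LTL Ap → Prop
  | .tt => True
  | .ff => False
  | .conj φ ψ => propEval v φ ∧ propEval v ψ
  | .disj φ ψ => propEval v φ ∨ propEval v ψ
  | φ => v φ

/-- Propositional equivalence `φ ≡_P ψ`. -/
def propEquiv (φ ψ : LTL Ap) : Prop := ∀ v, propEval v φ ↔ propEval v ψ

/-- The set of subformulas of a formula (including itself). -/
def subf : LTL Ap → Set (LTL Ap)
  | .tt => {LTL.tt}
  | .ff => {LTL.ff}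
  | .atom a => {LTL.atom a}
  | .natom a => {LTL.natom a}
  | .conj φ ψ => insert (.conj φ ψ) (subf φ ∪ subf ψ)
  | .disj φ ψ => insert (.disj φ ψ) (subf φ ∪ subf ψ)
  | .next φ => insert (.next φ) (subf φ)
  | .fut φ => insert (.fut φ) (subf φ)
  | .glob φ => insert (.glob φ) (subf φ)
  | .untl φ ψ => insert (.untl φ ψ) (subf φ ∪ subf ψ)
  | .wUntl φ ψ => insert (.wUntl φ ψ) (subf φ ∪ subf ψ)
  | .strongRel φ ψ => insert (.strongRel φ ψ) (subf φ ∪ subf ψ)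
  | .rel φ ψ => insert (.rel φ ψ) (subf φ ∪ subf ψ)

/-- A formula is proper if its root is not a conjunction or a disjunction. -/
def isProper : LTL Ap → Prop
  | .conj _ _ => False
  | .disj _ _ => False
  | _ => True

/-- The set of proper subformulas of `φ`. -/
def properSubf (φ : LTL Ap) : Set (LTL Ap) := {ψ | ψ ∈ subf φ ∧ isProper ψ}

/-- Formulas whose root is a least-fixed-point operator (`F`, `U`, `M`). -/
def isMu : LTL Ap → Prop
  | .fut _ => True
  | .untl _ _ => True
  | .strongRel _ _ => True
  | _ => False

/-- Formulas whose root is a greatest-fixed-point operator (`G`, `W`, `R`). -/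
def isNu : LTL Ap → Prop
  | .glob _ => True
  | .wUntl _ _ => True
  | .rel _ _ => True
  | _ => False

/-- `μ(φ)`: subformulas of `φ` of the form `Fψ`, `ψ₁Uψ₂`, `ψ₁Mψ₂`. -/
def muSet (φ : LTL Ap) : Set (LTL Ap) := {ψ | ψ ∈ subf φ ∧ isMu ψ}

/-- `ν(φ)`: subformulas of `φ` of the form `Gψ`, `ψ₁Wψ₂`, `ψ₁Rψ₂`. -/
def nuSet (φ : LTL Ap) : Set (LTL Ap) := {ψ | ψ ∈ subf φ ∧ isNu ψ}

/-- `GF_w = {ψ ∈ μ(φ) | w ⊨ GFψ}`. -/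
def GFSet (φ : LTL Ap) (w : ℕ → Finset Ap) : Set (LTL Ap) :=
  {ψ | ψ ∈ muSet φ ∧ Sat w (.glob (.fut ψ))}

/-- `F_w = {ψ ∈ μ(φ) | w ⊨ Fψ}`. -/
def FSet (φ : LTL Ap) (w : ℕ → Finset Ap) : Set (LTL Ap) :=
  {ψ | ψ ∈ muSet φ ∧ Sat w (.fut ψ)}

/-- `FG_w = {ψ ∈ ν(φ) | w ⊨ FGψ}`. -/
def FGSet (φ : LTL Ap) (w : ℕ → Finset Ap) : Set (LTL Ap) :=
  {ψ | ψ ∈ nuSet φ ∧ Sat w (.fut (.glob ψ))}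

/-- `G_w = {ψ ∈ ν(φ) | w ⊨ Gψ}`. -/
def GSet (φ : LTL Ap) (w : ℕ → Finset Ap) : Set (LTL Ap) :=
  {ψ | ψ ∈ nuSet φ ∧ Sat w (.glob ψ)}

open scoped Classical in
/-- `φ[X]_ν`. -/
noncomputable def evalNu (X : Set (LTL Ap)) : LTL Ap → LTL Ap
  | .tt => .tt
  | .ff => .ff
  | .atom a => .atom a
  | .natom a => .natom a
  | .conj φ ψ => .conj (evalNu X φ) (evalNu X ψ)
  | .disj φ ψ => .disj (evalNu X φ) (evalNu X ψ)
  | .next φ => .next (evalNu X φ)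
  | .glob φ => .glob (evalNu X φ)
  | .wUntl φ ψ => .wUntl (evalNu X φ) (evalNu X ψ)
  | .rel φ ψ => .rel (evalNu X φ) (evalNu X ψ)
  | .fut φ => if LTL.fut φ ∈ X then .tt else .ff
  | .untl φ ψ => if LTL.untl φ ψ ∈ X then .wUntl (evalNu X φ) (evalNu X ψ) else .ff
  | .strongRel φ ψ => if LTL.strongRel φ ψ ∈ X then .rel (evalNu X φ) (evalNu X ψ) else .ff

open scoped Classical in
/-- `φ[Y]_μ`. -/
noncomputable def evalMu (Y : Set (LTL Ap)) : LTL Ap → LTL Ap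
  | .tt => .tt
  | .ff => .ff
  | .atom a => .atom a
  | .natom a => .natom a
  | .conj φ ψ => .conj (evalMu Y φ) (evalMu Y ψ)
  | .disj φ ψ => .disj (evalMu Y φ) (evalMu Y ψ)
  | .next φ => .next (evalMu Y φ)
  | .fut φ => .fut (evalMu Y φ)
  | .untl φ ψ => .untl (evalMu Y φ) (evalMu Y ψ)
  | .strongRel φ ψ => .strongRel (evalMu Y φ) (evalMu Y ψ)
  | .glob φ => if LTL.glob φ ∈ Y then .tt else .ff
  | .wUntl φ ψ => if LTL.wUntl φ ψ ∈ Y then .tt else .untl (evalMu Y φ) (evalMu Y ψ)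
  | .rel φ ψ => if LTL.rel φ ψ ∈ Y then .tt else .strongRel (evalMu Y φ) (evalMu Y ψ)

/-- Concatenation `u·w` of a finite word and an infinite word. -/
def wordAppend (u : List (Finset Ap)) (w : ℕ → Finset Ap) : ℕ → Finset Ap :=
  fun i => if h : i < u.length then u.get ⟨i, h⟩ else w (i - u.length)

/-- The smallest set of formulas containing `tt`, `ff` and all elements of `S`
that is closed under conjunction and disjunction. -/
inductive PosBool (S : Set (LTL Ap)) : LTL Ap → Prop
  | tt : PosBool S .tt
  | ff : PosBool S .ff
  | base {ψ : LTL Ap} : ψ ∈ S → PosBool S ψ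
  | conj {φ ψ : LTL Ap} : PosBool S φ → PosBool S ψ → PosBool S (.conj φ ψ)
  | disj {φ ψ : LTL Ap} : PosBool S φ → PosBool S ψ → PosBool S (.disj φ ψ)

/-- `Reach(φ)`: the set of `≡_P`-equivalence classes of the formulas `af(φ,u)`
over all finite words `u`. -/
def Reach (φ : LTL Ap) : Set (Set (LTL Ap)) :=
  {C | ∃ u : List (Finset Ap), C = {ψ | propEquiv ψ (af φ u)}}

/-- The fragment `μLTL`: only `tt`, `ff`, literals, `∧`, `∨`, `X`, `F`, `U`, `M`. -/
def inMuLTL : LTL Ap → Prop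
  | .tt => True
  | .ff => True
  | .atom _ => True
  | .natom _ => True
  | .conj φ ψ => inMuLTL φ ∧ inMuLTL ψ
  | .disj φ ψ => inMuLTL φ ∧ inMuLTL ψ
  | .next φ => inMuLTL φ
  | .fut φ => inMuLTL φ
  | .untl φ ψ => inMuLTL φ ∧ inMuLTL ψ
  | .strongRel φ ψ => inMuLTL φ ∧ inMuLTL ψ
  | .glob _ => False
  | .wUntl _ _ => False
  | .rel _ _ => False

/-- The fragment `νLTL`: only `tt`, `ff`, literals, `∧`, `∨`, `X`, `G`, `W`, `R`. -/
def inNuLTL : LTL Ap → Prop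
  | .tt => True
  | .ff => True
  | .atom _ => True
  | .natom _ => True
  | .conj φ ψ => inNuLTL φ ∧ inNuLTL ψ
  | .disj φ ψ => inNuLTL φ ∧ inNuLTL ψ
  | .next φ => inNuLTL φ
  | .glob φ => inNuLTL φ
  | .wUntl φ ψ => inNuLTL φ ∧ inNuLTL ψ
  | .rel φ ψ => inNuLTL φ ∧ inNuLTL ψ
  | .fut _ => False
  | .untl _ _ => False
  | .strongRel _ _ => False

section Aux
variable {Ap : Type} [DecidableEq Ap]

lemma mem_subf_self (φ : LTL Ap) : φ ∈ subf φ := by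
  cases φ <;> simp [subf]

lemma subf_trans {φ ψ : LTL Ap} (h : ψ ∈ subf φ) : subf ψ ⊆ subf φ := by
  induction φ with
  | tt | ff | atom | natom =>
    simp only [subf, Set.mem_singleton_iff] at h; subst h; exact subset_rfl
  | next a ih | fut a ih | glob a ih =>
    simp only [subf, Set.mem_insert_iff] at h
    rcases h with rfl | h
    · exact subset_rfl
    · exact (ih h).trans (Set.subset_insert _ _)
  | conj a b iha ihb | disj a b iha ihb | untl a b iha ihb | wUntl a b iha ihb
  | strongRel a b iha ihb | rel a b iha ihb =>
    simp only [subf, Set.mem_insert_iff, Set.mem_union] at h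
    rcases h with rfl | h | h
    · exact subset_rfl
    · exact (iha h).trans (Set.subset_union_left.trans (Set.subset_insert _ _))
    · exact (ihb h).trans (Set.subset_union_right.trans (Set.subset_insert _ _))

lemma properSubf_mono {φ ψ : LTL Ap} (h : subf ψ ⊆ subf φ) :
    properSubf ψ ⊆ properSubf φ := fun _ hx => ⟨h hx.1, hx.2⟩

lemma posBool_mono {S T : Set (LTL Ap)} (h : S ⊆ T) {θ : LTL Ap}
    (hθ : PosBool S θ) : PosBool T θ := by
  induction hθ with
  | tt => exact .tt
  | ff => exact .ff
  | base hψ => exact .base (h hψ)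
  | conj _ _ iha ihb => exact .conj iha ihb
  | disj _ _ iha ihb => exact .disj iha ihb

lemma self_posBool (φ : LTL Ap) : PosBool (properSubf φ) φ := by
  induction φ with
  | conj a b iha ihb | disj a b iha ihb =>
    first
    | exact PosBool.conj
        (posBool_mono (properSubf_mono (Set.subset_union_left.trans (Set.subset_insert _ _))) iha)
        (posBool_mono (properSubf_mono (Set.subset_union_right.trans (Set.subset_insert _ _))) ihb)
    | exact PosBool.disj
        (posBool_mono (properSubf_mono (Set.subset_union_left.trans (Set.subset_insert _ _))) iha)
        (posBool_mono (properSubf_mono (Set.subset_union_right.trans (Set.subset_insert _ _))) ihb)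
  | _ => exact PosBool.base ⟨mem_subf_self _, by trivial⟩

lemma afLetter_posBool (φ : LTL Ap) (ν : Finset Ap) :
    ∀ ψ : LTL Ap, subf ψ ⊆ subf φ → PosBool (properSubf φ) (afLetter ψ ν) := by
  intro ψ
  induction ψ with
  | tt => intro _; exact .tt
  | ff => intro _; exact .ff
  | atom a =>
    intro _
    simp only [afLetter]
    split <;> [exact .tt; exact .ff]
  | natom a =>
    intro _
    simp only [afLetter]
    split <;> [exact .ff; exact .tt]
  | conj a b iha ihb =>
    intro hs
    have ha : subf a ⊆ subf φ :=
      (Set.subset_union_left.trans (Set.subset_insert _ _)).trans hs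
    have hb : subf b ⊆ subf φ :=
      (Set.subset_union_right.trans (Set.subset_insert _ _)).trans hs
    exact .conj (iha ha) (ihb hb)
  | disj a b iha ihb =>
    intro hs
    have ha : subf a ⊆ subf φ :=
      (Set.subset_union_left.trans (Set.subset_insert _ _)).trans hs
    have hb : subf b ⊆ subf φ :=
      (Set.subset_union_right.trans (Set.subset_insert _ _)).trans hs
    exact .disj (iha ha) (ihb hb)
  | next a ih =>
    intro hs
    have ha : subf a ⊆ subf φ := (Set.subset_insert _ _).trans hs
    exact posBool_mono (properSubf_mono ha) (self_posBool a)
  | fut a ih =>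
    intro hs
    have ha : subf a ⊆ subf φ := (Set.subset_insert _ _).trans hs
    exact .disj (ih ha) (.base ⟨hs (mem_subf_self _), trivial⟩)
  | glob a ih =>
    intro hs
    have ha : subf a ⊆ subf φ := (Set.subset_insert _ _).trans hs
    exact .conj (ih ha) (.base ⟨hs (mem_subf_self _), trivial⟩)
  | untl a b iha ihb | wUntl a b iha ihb =>
    intro hs
    have ha : subf a ⊆ subf φ :=
      (Set.subset_union_left.trans (Set.subset_insert _ _)).trans hs
    have hb : subf b ⊆ subf φ :=
      (Set.subset_union_right.trans (Set.subset_insert _ _)).trans hs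
    exact .disj (ihb hb) (.conj (iha ha) (.base ⟨hs (mem_subf_self _), trivial⟩))
  | strongRel a b iha ihb | rel a b iha ihb =>
    intro hs
    have ha : subf a ⊆ subf φ :=
      (Set.subset_union_left.trans (Set.subset_insert _ _)).trans hs
    have hb : subf b ⊆ subf φ :=
      (Set.subset_union_right.trans (Set.subset_insert _ _)).trans hs
    exact .conj (ihb hb) (.disj (iha ha) (.base ⟨hs (mem_subf_self _), trivial⟩))

lemma afLetter_posBool' {φ θ : LTL Ap} (h : PosBool (properSubf φ) θ)
    (ν : Finset Ap) : PosBool (properSubf φ) (afLetter θ ν) := by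
  induction h with
  | tt => exact .tt
  | ff => exact .ff
  | base hψ => exact afLetter_posBool φ ν _ (subf_trans hψ.1)
  | conj _ _ iha ihb => exact .conj iha ihb
  | disj _ _ iha ihb => exact .disj iha ihb

lemma af_posBool (φ : LTL Ap) (u : List (Finset Ap)) :
    PosBool (properSubf φ) (af φ u) := by
  suffices H : ∀ (u : List (Finset Ap)) (θ : LTL Ap),
      PosBool (properSubf φ) θ → PosBool (properSubf φ) (af θ u) from
    H u φ (self_posBool φ)
  intro u
  induction u with
  | nil => intro θ hθ; exact hθ
  | cons ν u ih => intro θ hθ; exact ih _ (afLetter_posBool' hθ ν)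

lemma propEval_invariant {S : Set (LTL Ap)} (hp : ∀ ψ ∈ S, isProper ψ)
    {θ : LTL Ap} (h : PosBool S θ) {v w : LTL Ap → Prop}
    (hvw : ∀ ψ ∈ S, (v ψ ↔ w ψ)) : propEval v θ ↔ propEval w θ := by
  induction h with
  | tt => simp [propEval]
  | ff => simp [propEval]
  | @base ψ hψ =>
    cases ψ with
    | conj a b => exact absurd (hp _ hψ) (by simp [isProper])
    | disj a b => exact absurd (hp _ hψ) (by simp [isProper])
    | tt => simp [propEval]
    | ff => simp [propEval]
    | _ => simpa [propEval] using hvw _ hψ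
  | conj _ _ iha ihb => simp [propEval, iha, ihb]
  | disj _ _ iha ihb => simp [propEval, iha, ihb]

lemma subf_finite (φ : LTL Ap) : (subf φ).Finite := by
  induction φ with
  | tt | ff | atom | natom => simp [subf]
  | next a ih | fut a ih | glob a ih => exact (Set.Finite.insert _ ih)
  | conj a b iha ihb | disj a b iha ihb | untl a b iha ihb | wUntl a b iha ihb
  | strongRel a b iha ihb | rel a b iha ihb =>
    exact Set.Finite.insert _ (iha.union ihb)

lemma properSubf_finite (φ : LTL Ap) : (properSubf φ).Finite :=
  (subf_finite φ).subset fun _ hx => hx.1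

end Aux
/-- if `φ` has at most `n` proper subformulas then `Reach(φ)` has
at most `2^(2^n)` elements. -/
theorem stmt2 {Ap : Type} [DecidableEq Ap] [Fintype Ap]
    (φ : LTL Ap) (n : ℕ) (h : (properSubf φ).ncard ≤ n) :
    (Reach φ).Finite ∧ (Reach φ).ncard ≤ 2 ^ (2 ^ n) := by
  classical
  set S := properSubf φ with hSdef
  have hSfin : S.Finite := properSubf_finite φ
  haveI : Fintype ↥S := hSfin.fintype
  have hp : ∀ ψ ∈ S, isProper ψ := fun ψ hψ => hψ.2
  let ext : (↥S → Bool) → (LTL Ap → Prop) := fun f ψ => ∃ h : ψ ∈ S, f ⟨ψ, h⟩ = true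
  let F : Set (LTL Ap) → ((↥S → Bool) → Bool) :=
    fun C f => decide (∀ θ ∈ C, propEval (ext f) θ)
  have keyF : ∀ (u : List (Finset Ap)) (f : ↥S → Bool),
      (F {ψ | propEquiv ψ (af φ u)} f = true ↔ propEval (ext f) (af φ u)) := by
    intro u f
    simp only [F, decide_eq_true_eq]
    constructor
    · intro H; exact H _ (fun v => Iff.rfl)
    · intro H θ hθ; exact (hθ (ext f)).mpr H
  have hinj : Set.InjOn F (Reach φ) := by
    rintro C1 ⟨u1, rfl⟩ C2 ⟨u2, rfl⟩ hF
    have heq : propEquiv (af φ u1) (af φ u2) := by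
      intro v
      let f : ↥S → Bool := fun ψ => decide (v ψ.1)
      have hvw : ∀ ψ ∈ S, (v ψ ↔ ext f ψ) := by
        intro ψ hψ
        constructor
        · intro hv; exact ⟨hψ, by simp [f, hv]⟩
        · rintro ⟨hm, hf⟩; simpa [f] using hf
      have h1 := propEval_invariant hp (af_posBool φ u1) hvw
      have h2 := propEval_invariant hp (af_posBool φ u2) hvw
      have hFf : F {ψ | propEquiv ψ (af φ u1)} f = F {ψ | propEquiv ψ (af φ u2)} f :=
        congrFun hF f
      calc propEval v (af φ u1) ↔ propEval (ext f) (af φ u1) := h1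
        _ ↔ (F {ψ | propEquiv ψ (af φ u1)} f = true) := (keyF u1 f).symm
        _ ↔ (F {ψ | propEquiv ψ (af φ u2)} f = true) := by rw [hFf]
        _ ↔ propEval (ext f) (af φ u2) := keyF u2 f
        _ ↔ propEval v (af φ u2) := h2.symm
    ext ψ
    simp only [Set.mem_setOf_eq]
    constructor
    · intro hψ v; exact (hψ v).trans (heq v)
    · intro hψ v; exact (hψ v).trans ((heq v).symm)
  have himfin : (F '' Reach φ).Finite := Set.toFinite _
  refine ⟨Set.Finite.of_finite_image himfin hinj, ?_⟩
  have hm : Fintype.card ↥S ≤ n := by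
    rwa [Set.ncard_eq_toFinset_card', Set.toFinset_card] at h
  calc (Reach φ).ncard = (F '' Reach φ).ncard := (Set.ncard_image_of_injOn hinj).symm
    _ ≤ (Set.univ : Set ((↥S → Bool) → Bool)).ncard :=
        Set.ncard_le_ncard (Set.subset_univ _) Set.finite_univ
    _ = Fintype.card ((↥S → Bool) → Bool) := by
        rw [Set.ncard_univ, Nat.card_eq_fintype_card]
    _ = 2 ^ (2 ^ Fintype.card ↥S) := by
        simp [Fintype.card_fun]
    _ ≤ 2 ^ (2 ^ n) :=
        Nat.pow_le_pow_right (by norm_num) (Nat.pow_le_pow_right (by norm_num) hm)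
end

section
/- For every formula φ of the fragment μLTL and every infinite word w over 2^Ap: w ⊨ φ if and only if there exists an index i such that af(φ, w_{0i}) ≡_P tt. -/
variable {Ap : Type} [DecidableEq Ap]

section Aux
set_option linter.unusedSectionVars false
variable {Ap : Type} [DecidableEq Ap]

@[simp] lemma suffix_zero' (w : ℕ → Finset Ap) : suffix w 0 = w := funext fun k => by simp [suffix]

lemma suffix_suffix (w : ℕ → Finset Ap) (a b : ℕ) :
    suffix (suffix w a) b = suffix w (a + b) := funext fun k => by simp [suffix, add_assoc]

lemma prefixWord_succ (w : ℕ → Finset Ap) (i : ℕ) :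
    prefixWord w (i+1) = prefixWord w i ++ [w i] := by
  simp [prefixWord, List.range_succ]

lemma prefixWord_cons (w : ℕ → Finset Ap) (i : ℕ) :
    prefixWord w (i+1) = w 0 :: prefixWord (suffix w 1) i := by
  simp [prefixWord, List.range_succ_eq_map, suffix, List.map_map, Function.comp,
    Nat.add_comm]

@[simp] lemma propEval_tt (v : LTL Ap → Prop) : propEval v LTL.tt = True := rfl
@[simp] lemma propEval_ff (v : LTL Ap → Prop) : propEval v LTL.ff = False := rfl
@[simp] lemma propEval_conj (v : LTL Ap → Prop) (φ ψ : LTL Ap) :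
    propEval v (LTL.conj φ ψ) = (propEval v φ ∧ propEval v ψ) := rfl
@[simp] lemma propEval_disj (v : LTL Ap → Prop) (φ ψ : LTL Ap) :
    propEval v (LTL.disj φ ψ) = (propEval v φ ∨ propEval v ψ) := rfl

lemma propEquiv_tt_iff (χ : LTL Ap) : propEquiv χ LTL.tt ↔ ∀ v, propEval v χ := by
  simp [propEquiv]

lemma af_append (φ : LTL Ap) (u v : List (Finset Ap)) :
    af φ (u ++ v) = af (af φ u) v := by
  induction u generalizing φ with
  | nil => rfl
  | cons ν u ih => simp [af, ih]

lemma af_conj (α β : LTL Ap) (u : List (Finset Ap)) :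
    af (LTL.conj α β) u = LTL.conj (af α u) (af β u) := by
  induction u generalizing α β with
  | nil => rfl
  | cons ν u ih => simp [af, afLetter, ih]

lemma af_disj (α β : LTL Ap) (u : List (Finset Ap)) :
    af (LTL.disj α β) u = LTL.disj (af α u) (af β u) := by
  induction u generalizing α β with
  | nil => rfl
  | cons ν u ih => simp [af, afLetter, ih]



lemma propEval_afLetter_of (χ : LTL Ap) (ν : Finset Ap) (V : LTL Ap → Prop)
    (h : propEval (fun ψ => propEval V (afLetter ψ ν)) χ) :
    propEval V (afLetter χ ν) := by
  induction χ with
  | conj α β ihα ihβ =>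
      simp only [propEval_conj] at h ⊢
      exact ⟨ihα h.1, ihβ h.2⟩
  | disj α β ihα ihβ =>
      simp only [propEval_disj, afLetter] at h ⊢
      exact h.elim (fun h => Or.inl (ihα h)) (fun h => Or.inr (ihβ h))
  | tt => simp [afLetter]
  | ff => exact h.elim
  | _ => exact h

lemma mono_letter (χ : LTL Ap) (ν : Finset Ap) (h : propEquiv χ LTL.tt) :
    propEquiv (afLetter χ ν) LTL.tt := by
  rw [propEquiv_tt_iff] at h ⊢
  intro V
  exact propEval_afLetter_of χ ν V (h _)

lemma mono_prefix (φ : LTL Ap) (w : ℕ → Finset Ap) {i j : ℕ} (hij : i ≤ j)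
    (h : propEquiv (af φ (prefixWord w i)) LTL.tt) :
    propEquiv (af φ (prefixWord w j)) LTL.tt := by
  induction j with
  | zero => exact (Nat.le_zero.mp hij ▸ h)
  | succ j ih =>
      rcases Nat.lt_or_ge i (j+1) with hlt | hge
      · have := ih (Nat.lt_succ_iff.mp hlt)
        rw [prefixWord_succ, af_append]
        exact mono_letter _ _ this
      · exact (Nat.le_antisymm hij hge) ▸ h

lemma propEval_sat (w : ℕ → Finset Ap) (χ : LTL Ap) : propEval (Sat w) χ ↔ Sat w χ := by
  induction χ with
  | conj α β ihα ihβ => simp [Sat, ihα, ihβ]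
  | disj α β ihα ihβ => simp [Sat, ihα, ihβ]
  | tt => simp [Sat]
  | ff => simp [Sat]
  | _ => exact Iff.rfl

lemma inMuLTL_afLetter {φ : LTL Ap} (hφ : inMuLTL φ) (ν : Finset Ap) :
    inMuLTL (afLetter φ ν) := by
  induction φ with
  | atom a => by_cases h : a ∈ ν <;> simp [afLetter, h, inMuLTL]
  | natom a => by_cases h : a ∈ ν <;> simp [afLetter, h, inMuLTL]
  | conj α β ihα ihβ => exact ⟨ihα hφ.1, ihβ hφ.2⟩
  | disj α β ihα ihβ => exact ⟨ihα hφ.1, ihβ hφ.2⟩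
  | next α ih => exact hφ
  | fut α ih => exact ⟨ih hφ, hφ⟩
  | untl α β ihα ihβ => exact ⟨ihβ hφ.2, ihα hφ.1, hφ⟩
  | strongRel α β ihα ihβ => exact ⟨ihβ hφ.2, ihα hφ.1, hφ⟩
  | glob α ih => exact hφ.elim
  | wUntl α β ihα ihβ => exact hφ.elim
  | rel α β ihα ihβ => exact hφ.elim
  | _ => trivial

lemma sat_afLetter {φ : LTL Ap} (hφ : inMuLTL φ) (w : ℕ → Finset Ap) :
    Sat w φ ↔ Sat (suffix w 1) (afLetter φ (w 0)) := by
  induction φ generalizing w with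
  | tt => simp [Sat, afLetter]
  | ff => simp [Sat, afLetter]
  | atom a => by_cases h : a ∈ w 0 <;> simp [Sat, afLetter, h]
  | natom a => by_cases h : a ∈ w 0 <;> simp [Sat, afLetter, h]
  | conj α β ihα ihβ =>
      simp only [Sat, afLetter]
      exact and_congr (ihα hφ.1 w) (ihβ hφ.2 w)
  | disj α β ihα ihβ =>
      simp only [Sat, afLetter]
      exact or_congr (ihα hφ.1 w) (ihβ hφ.2 w)
  | next α ih => exact Iff.rfl
  | fut α ih =>
      simp only [Sat, afLetter]
      constructor
      · rintro ⟨k, hk⟩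
        cases k with
        | zero =>
            left
            rw [← ih hφ w]
            simpa using hk
        | succ k =>
            right
            refine ⟨k, ?_⟩
            rw [suffix_suffix]
            have : 1 + k = k + 1 := by omega
            rw [this]
            exact hk
      · rintro (h | ⟨k, hk⟩)
        · exact ⟨0, by simpa using (ih hφ w).mpr h⟩
        · refine ⟨k + 1, ?_⟩
          rw [suffix_suffix, Nat.add_comm 1 k] at hk
          exact hk
  | untl α β ihα ihβ =>
      simp only [Sat, afLetter]
      constructor
      · rintro ⟨k, hk, hj⟩
        cases k with
        | zero =>
            left; rw [← ihβ hφ.2 w]; simpa using hk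
        | succ k =>
            right
            refine ⟨?_, k, ?_, ?_⟩
            · rw [← ihα hφ.1 w]
              simpa using hj 0 (Nat.succ_pos k)
            · rw [suffix_suffix, Nat.add_comm 1 k]; exact hk
            · intro j hjk
              rw [suffix_suffix, Nat.add_comm 1 j]
              exact hj (j+1) (by omega)
      · rintro (h | ⟨h0, k, hk, hj⟩)
        · exact ⟨0, by simpa using (ihβ hφ.2 w).mpr h, by omega⟩
        · refine ⟨k + 1, ?_, ?_⟩
          · rw [suffix_suffix, Nat.add_comm 1 k] at hk; exact hk
          · intro j hjk
            cases j with
            | zero => simpa using (ihα hφ.1 w).mpr h0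
            | succ j =>
                have := hj j (by omega)
                rw [suffix_suffix, Nat.add_comm 1 j] at this
                exact this
  | strongRel α β ihα ihβ =>
      simp only [Sat, afLetter]
      constructor
      · rintro ⟨k, hk, hj⟩
        refine ⟨?_, ?_⟩
        · rw [← ihβ hφ.2 w]; simpa using hj 0 (Nat.zero_le k)
        cases k with
        | zero =>
            left; rw [← ihα hφ.1 w]; simpa using hk
        | succ k =>
            right
            refine ⟨k, ?_, ?_⟩
            · rw [suffix_suffix, Nat.add_comm 1 k]; exact hk
            · intro j hjk
              rw [suffix_suffix, Nat.add_comm 1 j]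
              exact hj (j+1) (by omega)
      · rintro ⟨h0, h | ⟨k, hk, hj⟩⟩
        · exact ⟨0, by simpa using (ihα hφ.1 w).mpr h,
            fun j hj => by
              interval_cases j
              simpa using (ihβ hφ.2 w).mpr h0⟩
        · refine ⟨k + 1, ?_, ?_⟩
          · rw [suffix_suffix, Nat.add_comm 1 k] at hk; exact hk
          · intro j hjk
            cases j with
            | zero => simpa using (ihβ hφ.2 w).mpr h0
            | succ j =>
                have := hj j (by omega)
                rw [suffix_suffix, Nat.add_comm 1 j] at this
                exact this
  | glob α ih => exact hφ.elim
  | wUntl α β ihα ihβ => exact hφ.elim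
  | rel α β ihα ihβ => exact hφ.elim

lemma inMuLTL_af {φ : LTL Ap} (hφ : inMuLTL φ) (u : List (Finset Ap)) :
    inMuLTL (af φ u) := by
  induction u generalizing φ with
  | nil => exact hφ
  | cons ν u ih => exact ih (inMuLTL_afLetter hφ ν)

lemma sat_af_prefix {φ : LTL Ap} (hφ : inMuLTL φ) (w : ℕ → Finset Ap) (i : ℕ) :
    Sat w φ ↔ Sat (suffix w i) (af φ (prefixWord w i)) := by
  induction i with
  | zero => simp [prefixWord, af]
  | succ i ih =>
      rw [ih, prefixWord_succ, af_append,
        sat_afLetter (inMuLTL_af hφ _) (suffix w i)]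
      have h1 : suffix (suffix w i) 1 = suffix w (i+1) := suffix_suffix w i 1
      have h2 : suffix w i 0 = w i := by simp [suffix]
      rw [h1, h2]
      exact Iff.rfl

lemma easy_dir {φ : LTL Ap} (hφ : inMuLTL φ) (w : ℕ → Finset Ap) (i : ℕ)
    (h : propEquiv (af φ (prefixWord w i)) LTL.tt) : Sat w φ := by
  rw [sat_af_prefix hφ w i, ← propEval_sat]
  have := h (Sat (suffix w i))
  simpa using this

lemma fut_pump (φ : LTL Ap) (V : LTL Ap → Prop) :
    ∀ (k : ℕ) (w : ℕ → Finset Ap) (n : ℕ), k < n →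
      propEval V (af φ (prefixWord (suffix w k) (n - k))) →
      propEval V (af (LTL.fut φ) (prefixWord w n)) := by
  intro k
  induction k with
  | zero =>
      intro w n hn h
      obtain ⟨m, rfl⟩ : ∃ m, n = m + 1 := ⟨n - 1, by omega⟩
      simp only [suffix_zero', Nat.sub_zero] at h
      rw [prefixWord_cons]
      show propEval V (af (LTL.disj (afLetter φ (w 0)) (LTL.fut φ)) _)
      rw [af_disj, propEval_disj]
      left
      rw [prefixWord_cons] at h
      exact h
  | succ k ih =>
      intro w n hn h
      obtain ⟨m, rfl⟩ : ∃ m, n = m + 1 := ⟨n - 1, by omega⟩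
      rw [prefixWord_cons]
      show propEval V (af (LTL.disj (afLetter φ (w 0)) (LTL.fut φ)) _)
      rw [af_disj, propEval_disj]
      right
      apply ih (suffix w 1) m (by omega)
      rw [suffix_suffix, Nat.add_comm 1 k]
      have : m - k = m + 1 - (k + 1) := by omega
      rw [this]
      exact h

lemma untl_pump (φ ψ : LTL Ap) (V : LTL Ap → Prop) :
    ∀ (k : ℕ) (w : ℕ → Finset Ap) (n : ℕ), k < n →
      propEval V (af ψ (prefixWord (suffix w k) (n - k))) →
      (∀ j < k, propEval V (af φ (prefixWord (suffix w j) (n - j)))) →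
      propEval V (af (LTL.untl φ ψ) (prefixWord w n)) := by
  intro k
  induction k with
  | zero =>
      intro w n hn h _
      obtain ⟨m, rfl⟩ : ∃ m, n = m + 1 := ⟨n - 1, by omega⟩
      simp only [suffix_zero', Nat.sub_zero] at h
      rw [prefixWord_cons]
      show propEval V (af (LTL.disj (afLetter ψ (w 0))
        (LTL.conj (afLetter φ (w 0)) (LTL.untl φ ψ))) _)
      rw [af_disj, propEval_disj]
      left
      rw [prefixWord_cons] at h
      exact h
  | succ k ih =>
      intro w n hn h hj
      obtain ⟨m, rfl⟩ : ∃ m, n = m + 1 := ⟨n - 1, by omega⟩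
      rw [prefixWord_cons]
      show propEval V (af (LTL.disj (afLetter ψ (w 0))
        (LTL.conj (afLetter φ (w 0)) (LTL.untl φ ψ))) _)
      rw [af_disj, af_conj, propEval_disj, propEval_conj]
      right
      constructor
      · have h0 := hj 0 (Nat.succ_pos k)
        simp only [suffix_zero', Nat.sub_zero] at h0
        rw [prefixWord_cons] at h0
        exact h0
      · apply ih (suffix w 1) m (by omega)
        · rw [suffix_suffix, Nat.add_comm 1 k]
          have : m - k = m + 1 - (k + 1) := by omega
          rw [this]
          exact h
        · intro j hjk
          have := hj (j+1) (by omega)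
          rw [suffix_suffix, Nat.add_comm 1 j]
          have e : m - j = m + 1 - (j + 1) := by omega
          rw [e]
          exact this

lemma strongRel_pump (φ ψ : LTL Ap) (V : LTL Ap → Prop) :
    ∀ (k : ℕ) (w : ℕ → Finset Ap) (n : ℕ), k < n →
      propEval V (af φ (prefixWord (suffix w k) (n - k))) →
      (∀ j ≤ k, propEval V (af ψ (prefixWord (suffix w j) (n - j)))) →
      propEval V (af (LTL.strongRel φ ψ) (prefixWord w n)) := by
  intro k
  induction k with
  | zero =>
      intro w n hn h hj
      obtain ⟨m, rfl⟩ : ∃ m, n = m + 1 := ⟨n - 1, by omega⟩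
      simp only [suffix_zero', Nat.sub_zero] at h
      rw [prefixWord_cons]
      show propEval V (af (LTL.conj (afLetter ψ (w 0))
        (LTL.disj (afLetter φ (w 0)) (LTL.strongRel φ ψ))) _)
      rw [af_conj, af_disj, propEval_conj, propEval_disj]
      constructor
      · have h0 := hj 0 (Nat.le_refl 0)
        simp only [suffix_zero', Nat.sub_zero] at h0
        rw [prefixWord_cons] at h0
        exact h0
      · left
        rw [prefixWord_cons] at h
        exact h
  | succ k ih =>
      intro w n hn h hj
      obtain ⟨m, rfl⟩ : ∃ m, n = m + 1 := ⟨n - 1, by omega⟩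
      rw [prefixWord_cons]
      show propEval V (af (LTL.conj (afLetter ψ (w 0))
        (LTL.disj (afLetter φ (w 0)) (LTL.strongRel φ ψ))) _)
      rw [af_conj, af_disj, propEval_conj, propEval_disj]
      constructor
      · have h0 := hj 0 (Nat.zero_le _)
        simp only [suffix_zero', Nat.sub_zero] at h0
        rw [prefixWord_cons] at h0
        exact h0
      · right
        apply ih (suffix w 1) m (by omega)
        · rw [suffix_suffix, Nat.add_comm 1 k]
          have : m - k = m + 1 - (k + 1) := by omega
          rw [this]
          exact h
        · intro j hjk
          have := hj (j+1) (by omega)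
          rw [suffix_suffix, Nat.add_comm 1 j]
          have e : m - j = m + 1 - (j + 1) := by omega
          rw [e]
          exact this

lemma hard_dir : ∀ φ : LTL Ap, inMuLTL φ → ∀ w : ℕ → Finset Ap, Sat w φ →
    ∃ i, propEquiv (af φ (prefixWord w i)) LTL.tt := by
  intro φ
  induction φ with
  | tt => exact fun _ _ _ => ⟨0, fun v => Iff.rfl⟩
  | ff => exact fun _ _ h => h.elim
  | atom a =>
      intro _ w h
      refine ⟨1, ?_⟩
      have hp : prefixWord w 1 = [w 0] := by simp [prefixWord, List.range_succ]
      rw [hp]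
      have h' : a ∈ w 0 := h
      show propEquiv (afLetter (LTL.atom a) (w 0)) LTL.tt
      simp only [afLetter, if_pos h']
      exact fun v => Iff.rfl
  | natom a =>
      intro _ w h
      refine ⟨1, ?_⟩
      have hp : prefixWord w 1 = [w 0] := by simp [prefixWord, List.range_succ]
      rw [hp]
      have h' : a ∉ w 0 := h
      show propEquiv (afLetter (LTL.natom a) (w 0)) LTL.tt
      simp only [afLetter, if_neg h']
      exact fun v => Iff.rfl
  | conj α β ihα ihβ =>
      intro hφ w h
      obtain ⟨i, hi⟩ := ihα hφ.1 w h.1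
      obtain ⟨j, hj⟩ := ihβ hφ.2 w h.2
      refine ⟨max i j, ?_⟩
      rw [af_conj, propEquiv_tt_iff]
      have hA := mono_prefix α w (le_max_left i j) hi
      have hB := mono_prefix β w (le_max_right i j) hj
      rw [propEquiv_tt_iff] at hA hB
      intro v
      rw [propEval_conj]
      exact ⟨hA v, hB v⟩
  | disj α β ihα ihβ =>
      intro hφ w h
      rcases h with h | h
      · obtain ⟨i, hi⟩ := ihα hφ.1 w h
        refine ⟨i, ?_⟩
        rw [af_disj, propEquiv_tt_iff]
        rw [propEquiv_tt_iff] at hi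
        intro v
        rw [propEval_disj]
        exact Or.inl (hi v)
      · obtain ⟨i, hi⟩ := ihβ hφ.2 w h
        refine ⟨i, ?_⟩
        rw [af_disj, propEquiv_tt_iff]
        rw [propEquiv_tt_iff] at hi
        intro v
        rw [propEval_disj]
        exact Or.inr (hi v)
  | next α ih =>
      intro hφ w h
      obtain ⟨i, hi⟩ := ih hφ (suffix w 1) h
      refine ⟨i + 1, ?_⟩
      rw [prefixWord_cons]
      exact hi
  | fut α ih =>
      intro hφ w h
      obtain ⟨k, hk⟩ := h
      obtain ⟨i, hi⟩ := ih hφ (suffix w k) hk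
      refine ⟨k + i + 1, ?_⟩
      rw [propEquiv_tt_iff]
      intro V
      apply fut_pump α V k w (k + i + 1) (by omega)
      have e : k + i + 1 - k = i + 1 := by omega
      rw [e]
      have := mono_prefix α (suffix w k) (Nat.le_succ i) hi
      rw [propEquiv_tt_iff] at this
      exact this V
  | untl α β ihα ihβ =>
      intro hφ w h
      obtain ⟨k, hk, hjs⟩ := h
      obtain ⟨iψ, hiψ⟩ := ihβ hφ.2 (suffix w k) hk
      have hex : ∀ j, ∃ i, j < k → propEquiv (af α (prefixWord (suffix w j) i)) LTL.tt := by
        intro j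
        by_cases hj : j < k
        · obtain ⟨i, hi⟩ := ihα hφ.1 (suffix w j) (hjs j hj)
          exact ⟨i, fun _ => hi⟩
        · exact ⟨0, fun h' => absurd h' hj⟩
      choose f hf using hex
      refine ⟨k + iψ + (Finset.range k).sup f + 1, ?_⟩
      rw [propEquiv_tt_iff]
      intro V
      apply untl_pump α β V k w _ (by omega)
      · have e : k + iψ + (Finset.range k).sup f + 1 - k
            = iψ + (Finset.range k).sup f + 1 := by omega
        rw [e]
        have := mono_prefix β (suffix w k)
          (by omega : iψ ≤ iψ + (Finset.range k).sup f + 1) hiψ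
        rw [propEquiv_tt_iff] at this
        exact this V
      · intro j hj
        have hfj : f j ≤ (Finset.range k).sup f :=
          Finset.le_sup (Finset.mem_range.mpr hj)
        have := mono_prefix α (suffix w j)
          (by omega : f j ≤ k + iψ + (Finset.range k).sup f + 1 - j) (hf j hj)
        rw [propEquiv_tt_iff] at this
        exact this V
  | strongRel α β ihα ihβ =>
      intro hφ w h
      obtain ⟨k, hk, hjs⟩ := h
      obtain ⟨iφ, hiφ⟩ := ihα hφ.1 (suffix w k) hk
      have hex : ∀ j, ∃ i, j ≤ k → propEquiv (af β (prefixWord (suffix w j) i)) LTL.tt := by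
        intro j
        by_cases hj : j ≤ k
        · obtain ⟨i, hi⟩ := ihβ hφ.2 (suffix w j) (hjs j hj)
          exact ⟨i, fun _ => hi⟩
        · exact ⟨0, fun h' => absurd h' hj⟩
      choose f hf using hex
      refine ⟨k + iφ + (Finset.range (k+1)).sup f + 1, ?_⟩
      rw [propEquiv_tt_iff]
      intro V
      apply strongRel_pump α β V k w _ (by omega)
      · have e : k + iφ + (Finset.range (k+1)).sup f + 1 - k
            = iφ + (Finset.range (k+1)).sup f + 1 := by omega
        rw [e]
        have := mono_prefix α (suffix w k)
          (by omega : iφ ≤ iφ + (Finset.range (k+1)).sup f + 1) hiφ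
        rw [propEquiv_tt_iff] at this
        exact this V
      · intro j hj
        have hfj : f j ≤ (Finset.range (k+1)).sup f :=
          Finset.le_sup (Finset.mem_range.mpr (by omega))
        have := mono_prefix β (suffix w j)
          (by omega : f j ≤ k + iφ + (Finset.range (k+1)).sup f + 1 - j) (hf j hj)
        rw [propEquiv_tt_iff] at this
        exact this V
  | glob α ih => exact fun hφ => hφ.elim
  | wUntl α β ihα ihβ => exact fun hφ => hφ.elim
  | rel α β ihα ihβ => exact fun hφ => hφ.elim

end Aux

/-- for `φ ∈ μLTL`, `w ⊨ φ` iff `af(φ, w_{0i}) ≡_P tt` for some `i`. -/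
theorem stmt3 {Ap : Type} [DecidableEq Ap] [Fintype Ap]
    (φ : LTL Ap) (hφ : inMuLTL φ) (w : ℕ → Finset Ap) :
    Sat w φ ↔ ∃ i : ℕ, propEquiv (af φ (prefixWord w i)) LTL.tt := by
  constructor
  · exact fun h => hard_dir φ hφ w h
  · rintro ⟨i, hi⟩
    exact easy_dir hφ w i hi
end
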